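/- The internal-action transition relation of the labelled transition system for λ_S coincides exactly with the one-step reduction relation: t →τ t' if and only if t → t'. -/

import Mathlib

namespace LamS

/-- Terms of the λ-calculus with shift and reset, in de Bruijn representation.
    `lam` and `shift` bind variable 0. -/
inductive Tm : Type
  | var : ℕ → Tm
  | lam : Tm → Tm
  | app : Tm → Tm → Tm
  | shift : Tm → Tm
  | reset : Tm → Tm
  deriving DecidableEq

open Tm

/-- Lift (shift up) free de Bruijn indices `≥ c` by `d`. -/
def liftT (d : ℕ) : ℕ → Tm → Tm
  | c, var n => if n < c then var n else var (n + d)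
  | c, lam t => lam (liftT d (c+1) t)
  | c, app a b => app (liftT d c a) (liftT d c b)
  | c, shift t => shift (liftT d (c+1) t)
  | c, reset t => reset (liftT d c t)

/-- Capture-avoiding substitution `t[j := s]` (de Bruijn). -/
def substT : ℕ → Tm → Tm → Tm
  | j, s, var n => if n = j then liftT j 0 s else if j < n then var (n-1) else var n
  | j, s, lam t => lam (substT (j+1) s t)
  | j, s, app a b => app (substT j s a) (substT j s b)
  | j, s, shift t => shift (substT (j+1) s t)
  | j, s, reset t => reset (substT j s t)

/-- Values are λ-abstractions. -/
def IsValue (t : Tm) : Prop := ∃ b, t = lam b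

/-- All free variables are `< n`. -/
def ClosedUnder : ℕ → Tm → Prop
  | n, var m => m < n
  | n, lam t => ClosedUnder (n+1) t
  | n, app a b => ClosedUnder n a ∧ ClosedUnder n b
  | n, shift t => ClosedUnder (n+1) t
  | n, reset t => ClosedUnder n t

def Closed (t : Tm) : Prop := ClosedUnder 0 t

/-- Pure evaluation contexts, interpreted inside-out:
    `appV b E` is `E[(λ.b) []]` and `appL E t` is `E[[] t]`. -/
inductive PCtx : Type
  | hole : PCtx
  | appV : Tm → PCtx → PCtx
  | appL : PCtx → Tm → PCtx
  deriving DecidableEq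

def PCtx.plug : PCtx → Tm → Tm
  | .hole, t => t
  | .appV b E, t => E.plug (app (lam b) t)
  | .appL E s, t => E.plug (app t s)

def PCtx.liftC (d : ℕ) : ℕ → PCtx → PCtx
  | _, .hole => .hole
  | c, .appV b E => .appV (liftT d (c+1) b) (PCtx.liftC d c E)
  | c, .appL E s => .appL (PCtx.liftC d c E) (liftT d c s)

/-- Composition of pure contexts: `(E.comp E').plug t = E.plug (E'.plug t)`. -/
def PCtx.comp : PCtx → PCtx → PCtx
  | E, .hole => E
  | E, .appV b E' => .appV b (E.comp E')
  | E, .appL E' s => .appL (E.comp E') s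

/-- The captured delimited continuation `λx.⟨E[x]⟩`. -/
def contOf (E : PCtx) : Tm := lam (reset ((PCtx.liftC 1 0 E).plug (var 0)))

/-- Call-by-value evaluation contexts, interpreted inside-out. -/
inductive ECtx : Type
  | hole : ECtx
  | appV : Tm → ECtx → ECtx
  | appL : ECtx → Tm → ECtx
  | resetC : ECtx → ECtx
  deriving DecidableEq

def ECtx.plug : ECtx → Tm → Tm
  | .hole, t => t
  | .appV b F, t => F.plug (app (lam b) t)
  | .appL F s, t => F.plug (app t s)
  | .resetC F, t => F.plug (reset t)

def ClosedECtx : ECtx → Prop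
  | .hole => True
  | .appV b F => ClosedUnder 1 b ∧ ClosedECtx F
  | .appL F s => ClosedECtx F ∧ Closed s
  | .resetC F => ClosedECtx F

/-- One-step reduction of λ_S. -/
inductive Red : Tm → Tm → Prop
  | beta (F : ECtx) (t v : Tm) (hv : IsValue v) :
      Red (F.plug (app (lam t) v)) (F.plug (substT 0 v t))
  | cap (F : ECtx) (E : PCtx) (t : Tm) :
      Red (F.plug (reset (E.plug (shift t)))) (F.plug (reset (substT 0 (contOf E) t)))
  | res (F : ECtx) (v : Tm) (hv : IsValue v) :
      Red (F.plug (reset v)) (F.plug v)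

def RedStar : Tm → Tm → Prop := Relation.ReflTransGen Red

/-- A term is stuck if it is not a value and cannot reduce. -/
def Stuck (t : Tm) : Prop := ¬ IsValue t ∧ ∀ u, ¬ Red t u

/-- Evaluation: reduce to an irreducible term. -/
def Eval (t t' : Tm) : Prop := RedStar t t' ∧ ∀ u, ¬ Red t' u

def IsRedex (r : Tm) : Prop :=
  (∃ t v, IsValue v ∧ r = app (lam t) v) ∨
  (∃ E s, r = reset (PCtx.plug E (shift s))) ∨
  (∃ v, IsValue v ∧ r = reset v)

/-- Labels of the LTS. -/
inductive Label : Type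
  | tau : Label
  | val : Tm → Label
  | ctx : PCtx → Label

/-- The labelled transition system for λ_S. -/
inductive Step : Tm → Label → Tm → Prop
  | beta {t v : Tm} (hv : IsValue v) :
      Step (app (lam t) v) .tau (substT 0 v t)
  | resetVal {v : Tm} (hv : IsValue v) :
      Step (reset v) .tau v
  | appL {t0 t0' t1 : Tm} :
      Step t0 .tau t0' → Step (app t0 t1) .tau (app t0' t1)
  | appR {v t t' : Tm} (hv : IsValue v) :
      Step t .tau t' → Step (app v t) .tau (app v t')
  | resetT {t t' : Tm} :
      Step t .tau t' → Step (reset t) .tau (reset t')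
  | resetCap {t t' : Tm} :
      Step t (.ctx .hole) t' → Step (reset t) .tau t'
  | lamApp {t v : Tm} (hv : IsValue v) :
      Step (lam t) (.val v) (substT 0 v t)
  | shiftCap {t : Tm} (E : PCtx) :
      Step (shift t) (.ctx E) (reset (substT 0 (contOf E) t))
  | capL {t0 t0' t1 : Tm} {E : PCtx} :
      Step t0 (.ctx (.appL E t1)) t0' → Step (app t0 t1) (.ctx E) t0'
  | capR {b t t' : Tm} {E : PCtx} :
      Step t (.ctx (.appV b E)) t' → Step (app (lam b) t) (.ctx E) t'

def TauStar : Tm → Tm → Prop := Relation.ReflTransGen (fun a b => Step a .tau b)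

/-- Weak delay transition: τ-steps, then an `l`-step if `l ≠ τ`. -/
def Weak (t : Tm) (l : Label) (t' : Tm) : Prop :=
  match l with
  | .tau => TauStar t t'
  | _ => ∃ u, TauStar t u ∧ Step u l t'

/-- Applicative simulation. -/
def IsSim (R : Tm → Tm → Prop) : Prop :=
  ∀ ⦃t0 t1⦄, R t0 t1 → ∀ ⦃l t0'⦄, Step t0 l t0' →
    ∃ t1', Weak t1 l t1' ∧ R t0' t1'

def IsBisim (R : Tm → Tm → Prop) : Prop := IsSim R ∧ IsSim (flip R)

/-- Applicative bisimilarity: the largest applicative bisimulation. -/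
def Bisim (t0 t1 : Tm) : Prop := ∃ R, IsBisim R ∧ R t0 t1

/-- Big-step applicative simulation. -/
def IsBigSim (R : Tm → Tm → Prop) : Prop :=
  ∀ ⦃t0 t1⦄, R t0 t1 → ∀ ⦃l t0'⦄, l ≠ Label.tau → Weak t0 l t0' →
    ∃ t1', Weak t1 l t1' ∧ R t0' t1'

def IsBigBisim (R : Tm → Tm → Prop) : Prop := IsBigSim R ∧ IsBigSim (flip R)

/-- Big-step applicative bisimilarity. -/
def BigBisim (t0 t1 : Tm) : Prop := ∃ R, IsBigBisim R ∧ R t0 t1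

/-- General contexts. -/
inductive Ctx : Type
  | hole : Ctx
  | lam : Ctx → Ctx
  | appL : Ctx → Tm → Ctx
  | appR : Tm → Ctx → Ctx
  | shift : Ctx → Ctx
  | reset : Ctx → Ctx

/-- Plugging a term in a general context (free variables may be captured). -/
def Ctx.plug : Ctx → Tm → Tm
  | .hole, t => t
  | .lam C, t => Tm.lam (C.plug t)
  | .appL C s, t => Tm.app (C.plug t) s
  | .appR s C, t => Tm.app s (C.plug t)
  | .shift C, t => Tm.shift (C.plug t)
  | .reset C, t => Tm.reset (C.plug t)

def CtxClosedUnder : ℕ → Ctx → Prop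
  | _, .hole => True
  | n, .lam C => CtxClosedUnder (n+1) C
  | n, .appL C s => CtxClosedUnder n C ∧ ClosedUnder n s
  | n, .appR s C => ClosedUnder n s ∧ CtxClosedUnder n C
  | n, .shift C => CtxClosedUnder (n+1) C
  | n, .reset C => CtxClosedUnder n C

def ClosedCtx (C : Ctx) : Prop := CtxClosedUnder 0 C

def EvalsToValue (t : Tm) : Prop := ∃ v, IsValue v ∧ Eval t v

def EvalsToStuck (t : Tm) : Prop := ∃ s, Stuck s ∧ Eval t s

/-- Contextual equivalence on closed terms. -/
def CtxEquiv (t0 t1 : Tm) : Prop :=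
  ∀ C : Ctx, ClosedCtx C →
    (EvalsToValue (C.plug t0) ↔ EvalsToValue (C.plug t1)) ∧
    (EvalsToStuck (C.plug t0) ↔ EvalsToStuck (C.plug t1))

/-- Contextual equivalence restricted to evaluation contexts. -/
def ECtxEquiv (t0 t1 : Tm) : Prop :=
  ∀ F : ECtx, ClosedECtx F →
    (EvalsToValue (F.plug t0) ↔ EvalsToValue (F.plug t1)) ∧
    (EvalsToStuck (F.plug t0) ↔ EvalsToStuck (F.plug t1))

/-- Lifting a substitution under a binder. -/
def liftSub (σ : ℕ → Tm) : ℕ → Tm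
  | 0 => var 0
  | n+1 => liftT 1 0 (σ n)

/-- Apply a substitution to all free variables of a term. -/
def applySub (σ : ℕ → Tm) : Tm → Tm
  | var n => σ n
  | lam t => lam (applySub (liftSub σ) t)
  | app a b => app (applySub σ a) (applySub σ b)
  | shift t => shift (applySub (liftSub σ) t)
  | reset t => reset (applySub σ t)

/-- A closing substitution maps every variable to a closed value. -/
def ClosingSub (σ : ℕ → Tm) : Prop := ∀ n, IsValue (σ n) ∧ Closed (σ n)

/-- Open extension of a relation on closed terms. -/
def OpenExt (R : Tm → Tm → Prop) (t0 t1 : Tm) : Prop :=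
  ∀ σ, ClosingSub σ → R (applySub σ t0) (applySub σ t1)

/-- Howe's closure of applicative bisimilarity (compatible refinement rules inlined). -/
inductive Howe : Tm → Tm → Prop
  | base {t0 t1} : OpenExt Bisim t0 t1 → Howe t0 t1
  | right {t0 t2 t1} : Howe t0 t2 → OpenExt Bisim t2 t1 → Howe t0 t1
  | compVar (n : ℕ) : Howe (var n) (var n)
  | compLam {t0 t1} : Howe t0 t1 → Howe (lam t0) (lam t1)
  | compApp {a0 a1 b0 b1} : Howe a0 a1 → Howe b0 b1 → Howe (app a0 b0) (app a1 b1)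
  | compShift {t0 t1} : Howe t0 t1 → Howe (shift t0) (shift t1)
  | compReset {t0 t1} : Howe t0 t1 → Howe (reset t0) (reset t1)

/-- Howe's closure restricted to closed terms. -/
def HoweC (t0 t1 : Tm) : Prop := Closed t0 ∧ Closed t1 ∧ Howe t0 t1

/-- Extension of Howe's closure to pure contexts. -/
inductive PCtxHowe : PCtx → PCtx → Prop
  | hole : PCtxHowe .hole .hole
  | appV {b0 b1 E0 E1} : Howe b0 b1 → PCtxHowe E0 E1 → PCtxHowe (.appV b0 E0) (.appV b1 E1)
  | appL {E0 E1 t0 t1} : PCtxHowe E0 E1 → Howe t0 t1 → PCtxHowe (.appL E0 t0) (.appL E1 t1)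

/-- Extension of Howe's closure to labels. -/
def LabHowe : Label → Label → Prop
  | .tau, .tau => True
  | .val v0, .val v1 => Closed v0 ∧ Closed v1 ∧ Howe v0 v1
  | .ctx E0, .ctx E1 => PCtxHowe E0 E1
  | _, _ => False

/-- ω = λx. x x -/
def omegaTm : Tm := lam (app (var 0) (var 0))

/-- Ω = ω ω, the standard diverging term. -/
def OmegaTm : Tm := app omegaTm omegaTm

/-- Every τ-reachable term can do a τ-step: only infinite τ-sequences. -/
def Diverges (t : Tm) : Prop := ∀ u, TauStar t u → ∃ u', Step u .tau u'

/-- No weak non-τ transition. -/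
def NoObs (t : Tm) : Prop := ∀ l t', l ≠ Label.tau → ¬ Weak t l t'

/-!
A τ-transition is built by congruence rules that descend exactly through an evaluation context
to a redex, so it is a reduction step and conversely. The one non-local rule, `resetCap`, is
handled by reading a context-labelled transition `t →E t'` as a decomposition `t = D[Sk.s]`
whose continuation is `E[D]`; under the reset `E` is empty, which is the shift-capture rule.
-/

def ECtx.comp : ECtx → ECtx → ECtx
  | F, .hole => F
  | F, .appV b F' => .appV b (F.comp F')
  | F, .appL F' s => .appL (F.comp F') s
  | F, .resetC F' => .resetC (F.comp F')

theorem ECtx.comp_plug (F G : ECtx) (t : Tm) : (F.comp G).plug t = F.plug (G.plug t) := by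
  induction G generalizing t <;> simp [ECtx.comp, ECtx.plug, *]

theorem PCtx.comp_plug (E D : PCtx) (t : Tm) : (E.comp D).plug t = E.plug (D.plug t) := by
  induction D generalizing t <;> simp [PCtx.comp, PCtx.plug, *]

theorem PCtx.hole_comp (E : PCtx) : PCtx.hole.comp E = E := by
  induction E <;> simp [PCtx.comp, *]

theorem PCtx.comp_assoc (A B C : PCtx) : A.comp (B.comp C) = (A.comp B).comp C := by
  induction C <;> simp [PCtx.comp, *]

theorem Red.plug {t t' : Tm} (h : Red t t') (F : ECtx) : Red (F.plug t) (F.plug t') := by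
  cases h with
  | beta G u v hv => simpa only [← ECtx.comp_plug] using Red.beta (F.comp G) u v hv
  | cap G E u => simpa only [← ECtx.comp_plug] using Red.cap (F.comp G) E u
  | res G v hv => simpa only [← ECtx.comp_plug] using Red.res (F.comp G) v hv

theorem Step.tau_plug {t t' : Tm} (h : Step t .tau t') (F : ECtx) :
    Step (F.plug t) .tau (F.plug t') := by
  induction F generalizing t t' with
  | hole => exact h
  | appV b F ih => exact ih (.appR ⟨b, rfl⟩ h)
  | appL F s ih => exact ih (.appL h)
  | resetC F ih => exact ih (.resetT h)

theorem Step.ctx_plug {t t' : Tm} (D : PCtx) {E : PCtx} (h : Step t (.ctx (E.comp D)) t') :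
    Step (D.plug t) (.ctx E) t' := by
  induction D generalizing t E with
  | hole => exact h
  | appV b D ih => exact ih (.capR h)
  | appL D s ih => exact ih (.capL h)

theorem step_ctx_iff {t t' : Tm} {E : PCtx} :
    Step t (.ctx E) t' ↔
      ∃ D s, t = D.plug (shift s) ∧ t' = reset (substT 0 (contOf (E.comp D)) s) := by
  constructor
  · intro h
    generalize hl : Label.ctx E = l at h
    induction h generalizing E with
    | shiftCap => cases hl; exact ⟨.hole, _, rfl, rfl⟩
    | @capL _ _ t1 _ _ ih =>
      cases hl
      obtain ⟨D, s, rfl, rfl⟩ := ih rfl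
      refine ⟨(PCtx.appL .hole t1).comp D, s, by rw [PCtx.comp_plug]; rfl, ?_⟩
      rw [PCtx.comp_assoc]; rfl
    | @capR b _ _ _ _ ih =>
      cases hl
      obtain ⟨D, s, rfl, rfl⟩ := ih rfl
      refine ⟨(PCtx.appV b .hole).comp D, s, by rw [PCtx.comp_plug]; rfl, ?_⟩
      rw [PCtx.comp_assoc]; rfl
    | beta | resetVal | appL | appR | resetT | resetCap | lamApp => cases hl
  · rintro ⟨D, s, rfl, rfl⟩
    exact Step.ctx_plug D (.shiftCap _)

theorem Red.of_step_tau {t t' : Tm} (h : Step t .tau t') : Red t t' := by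
  generalize hl : Label.tau = l at h
  induction h with
  | beta hv => exact Red.beta .hole _ _ hv
  | resetVal hv => exact Red.res .hole _ hv
  | appL _ ih => exact (ih hl).plug (.appL .hole _)
  | appR hv _ ih =>
    obtain ⟨b, rfl⟩ := hv
    exact (ih hl).plug (.appV b .hole)
  | resetT _ ih => exact (ih hl).plug (.resetC .hole)
  | resetCap h =>
    obtain ⟨D, s, rfl, rfl⟩ := step_ctx_iff.1 h
    rw [PCtx.hole_comp]
    exact Red.cap .hole D s
  | lamApp | shiftCap | capL | capR => cases hl

theorem Red.step_tau {t t' : Tm} (h : Red t t') : Step t .tau t' := by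
  cases h with
  | beta F u v hv => exact (Step.beta hv).tau_plug F
  | res F v hv => exact (Step.resetVal hv).tau_plug F
  | cap F E u =>
    refine (Step.resetCap (step_ctx_iff.2 ⟨E, u, rfl, ?_⟩)).tau_plug F
    rw [PCtx.hole_comp]

end LamS
open LamS LamS.Tm in
/-- τ-transitions of the LTS coincide with one-step reduction. -/
theorem tau_eq_red :
    ∀ t t' : Tm, Step t Label.tau t' ↔ Red t t' :=
  fun _ _ => ⟨Red.of_step_tau, Red.step_tau⟩
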